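/- Let F, G : ℝ^n × (0,∞) → [0,∞] be measurable and let a > 0. Define the area functional 𝒜₂^a H(x) = ( ∫_{{(y,t) : |x-y| < a t, t > 0}} H(y,t)² t^{-(n+1)} dy dt )^{1/2}. Then ∫_{ℝ^n} ∫_0^∞ F(x,t) G(x,t) dt dx ≤ (1/(C_n a^n)) ∫_{ℝ^n} 𝒜₂^a(F)(x) · 𝒜₂^a(t·G)(x) dx, where t·G denotes the function (y,t) ↦ t G(y,t) and C_n is the volume of the unit ball in ℝ^n. -/

import Mathlib

/-!
Since the ball `B(x, a t)` has volume `C_n aⁿ tⁿ`, the integrand `F G` at `(x, t)` is the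
`dy`-average over that ball of `F G t⁻ⁿ`. Swapping the order of integration turns the condition
`|x - y| < a t` into `(x, t) ∈ Γ_a(y)`, the cone over `y`, and on that cone
`F G t⁻ⁿ = (F t^{-(n+1)/2}) · (t G t^{-(n+1)/2})`; Cauchy–Schwarz over `Γ_a(y)` gives
`𝒜₂^a F (y) · 𝒜₂^a (t G) (y)`.
-/

open MeasureTheory Set ENNReal

/-- The area functional `𝒜₂^a` of aperture `a`. -/
noncomputable def areaIntegral (n : ℕ) (a : ℝ)
    (H : EuclideanSpace ℝ (Fin n) × ℝ → ℝ≥0∞) (x : EuclideanSpace ℝ (Fin n)) : ℝ≥0∞ :=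
  (∫⁻ p in {p : EuclideanSpace ℝ (Fin n) × ℝ | dist x p.1 < a * p.2 ∧ 0 < p.2},
      (H p) ^ 2 / ENNReal.ofReal (p.2 ^ (n + 1))) ^ (1 / 2 : ℝ)

lemma lintegral_le_of_sq_le_mul {α : Type*} [MeasurableSpace α] {μ : Measure α}
    {h u v : α → ℝ≥0∞} (hu : AEMeasurable u μ) (hv : AEMeasurable v μ)
    (huv : ∀ᵐ x ∂μ, h x ^ 2 ≤ u x * v x) :
    ∫⁻ x, h x ∂μ ≤ (∫⁻ x, u x ∂μ) ^ (1 / 2 : ℝ) * (∫⁻ x, v x ∂μ) ^ (1 / 2 : ℝ) := by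
  have hsqrt_sq : ∀ z : ℝ≥0∞, (z ^ (1 / 2 : ℝ)) ^ (2 : ℝ) = z := fun z => by
    rw [← ENNReal.rpow_mul]; norm_num
  have hle : ∀ᵐ x ∂μ, h x ≤ u x ^ (1 / 2 : ℝ) * v x ^ (1 / 2 : ℝ) := by
    filter_upwards [huv] with x hx
    calc h x = (h x ^ 2) ^ (1 / 2 : ℝ) := by
          rw [← ENNReal.rpow_natCast, ← ENNReal.rpow_mul]; norm_num
      _ ≤ (u x * v x) ^ (1 / 2 : ℝ) := ENNReal.rpow_le_rpow hx (by norm_num)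
      _ = u x ^ (1 / 2 : ℝ) * v x ^ (1 / 2 : ℝ) := ENNReal.mul_rpow_of_nonneg _ _ (by norm_num)
  calc ∫⁻ x, h x ∂μ ≤ ∫⁻ x, (fun x => u x ^ (1 / 2 : ℝ)) x * (fun x => v x ^ (1 / 2 : ℝ)) x ∂μ :=
        lintegral_mono_ae hle
    _ ≤ _ := ENNReal.lintegral_mul_le_Lp_mul_Lq μ Real.HolderConjugate.two_two
        (hu.pow_const _) (hv.pow_const _)
    _ = _ := by simp only [hsqrt_sq]

lemma ENNReal.inv_mul_div_mul_mul_cancel {c s : ℝ≥0∞} (hc₀ : c ≠ 0) (hc : c ≠ ∞)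
    (hs₀ : s ≠ 0) (hs : s ≠ ∞) (z : ℝ≥0∞) : c⁻¹ * (z / s * (c * s)) = z := by
  calc c⁻¹ * (z / s * (c * s)) = c⁻¹ * c * (z / s * s) := by ring
    _ = z := by rw [ENNReal.inv_mul_cancel hc₀ hc, ENNReal.div_mul_cancel hs₀ hs, one_mul]

lemma ENNReal.mul_div_pow_sq {T : ℝ≥0∞} (hT₀ : T ≠ 0) (hT : T ≠ ∞) (u v : ℝ≥0∞) (n : ℕ) :
    (u * v / T ^ n) ^ 2 = u ^ 2 / T ^ (n + 1) * ((T * v) ^ 2 / T ^ (n + 1)) := by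
  have hTT : T * T⁻¹ = 1 := ENNReal.mul_inv_cancel hT₀ hT
  simp only [div_eq_mul_inv, ENNReal.inv_pow]
  calc (u * v * T⁻¹ ^ n) ^ 2 = (u * v * T⁻¹ ^ n) ^ 2 * (T * T⁻¹) ^ 2 := by rw [hTT]; ring
    _ = _ := by ring

section Cone

variable {E : Type*} [PseudoMetricSpace E]

def cone (a : ℝ) (x : E) : Set (E × ℝ) := {p | dist x p.1 < a * p.2 ∧ 0 < p.2}

variable [MeasurableSpace E] [OpensMeasurableSpace E]

lemma lintegral_indicator_cone (a : ℝ) (μ : Measure E) (h : E × ℝ → ℝ≥0∞) (x : E) (t : ℝ) :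
    ∫⁻ y, (cone a y).indicator h (x, t) ∂μ =
      (Ioi 0).indicator (fun t => h (x, t) * μ (Metric.ball x (a * t))) t := by
  by_cases ht : 0 < t
  · have hball : (fun y => (cone a y).indicator h (x, t)) =
        (Metric.ball x (a * t)).indicator fun _ => h (x, t) := by
      ext y
      simp only [indicator, cone, mem_ofPred_eq, Metric.mem_ball, ht, and_true]
    rw [hball, lintegral_indicator_const measurableSet_ball, indicator_of_mem (mem_Ioi.2 ht)]
  · simp [indicator, cone, ht]

variable [SecondCountableTopology E]

lemma measurableSet_setOf_mem_cone (a : ℝ) :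
    MeasurableSet {q : (E × ℝ) × E | q.1 ∈ cone a q.2} :=
  (measurableSet_lt (measurable_snd.dist measurable_fst.fst)
    (measurable_const.mul measurable_fst.snd)).inter (measurableSet_lt measurable_const measurable_fst.snd)

lemma measurableSet_cone (a : ℝ) (x : E) : MeasurableSet (cone a x) :=
  (measurableSet_lt (measurable_const.dist measurable_fst) (measurable_const.mul measurable_snd)).inter
    (measurableSet_lt measurable_const measurable_snd)

lemma lintegral_mul_measure_ball_eq_lintegral_cone (a : ℝ) (μ : Measure E) [SFinite μ]
    {h : E × ℝ → ℝ≥0∞} (hh : Measurable h) :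
    ∫⁻ x, ∫⁻ t in Ioi (0 : ℝ), h (x, t) * μ (Metric.ball x (a * t)) ∂volume ∂μ =
      ∫⁻ y, ∫⁻ p in cone a y, h p ∂μ.prod volume ∂μ := by
  have hmeas : Measurable fun q : (E × ℝ) × E => (cone a q.2).indicator h q.1 :=
    (hh.comp measurable_fst).indicator (measurableSet_setOf_mem_cone a)
  calc ∫⁻ x, ∫⁻ t in Ioi (0 : ℝ), h (x, t) * μ (Metric.ball x (a * t)) ∂volume ∂μ
      = ∫⁻ x, ∫⁻ t, ∫⁻ y, (cone a y).indicator h (x, t) ∂μ ∂volume ∂μ := by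
        simp only [lintegral_indicator_cone, lintegral_indicator measurableSet_Ioi]
    _ = ∫⁻ p, ∫⁻ y, (cone a y).indicator h p ∂μ ∂μ.prod volume :=
        (lintegral_prod _ hmeas.lintegral_prod_right'.aemeasurable).symm
    _ = ∫⁻ y, ∫⁻ p, (cone a y).indicator h p ∂μ.prod volume ∂μ :=
        lintegral_lintegral_swap hmeas.aemeasurable
    _ = ∫⁻ y, ∫⁻ p in cone a y, h p ∂μ.prod volume ∂μ := by
        simp only [lintegral_indicator (measurableSet_cone a _)]

end Cone

lemma EuclideanSpace.volume_ball_mul {n : ℕ} (x : EuclideanSpace ℝ (Fin n)) {a t : ℝ}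
    (ha : 0 < a) (ht : 0 < t) :
    volume (Metric.ball x (a * t)) =
      volume (Metric.ball (0 : EuclideanSpace ℝ (Fin n)) 1) * ENNReal.ofReal (a ^ n) *
        ENNReal.ofReal (t ^ n) := by
  rw [Measure.addHaar_ball_of_pos _ _ (mul_pos ha ht), finrank_euclideanSpace_fin, mul_pow,
    ENNReal.ofReal_mul (pow_nonneg ha.le n)]
  ring

lemma lintegral_cone_le_areaIntegral_mul {n : ℕ} (a : ℝ)
    {F G : EuclideanSpace ℝ (Fin n) × ℝ → ℝ≥0∞} (hF : Measurable F) (hG : Measurable G)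
    (y : EuclideanSpace ℝ (Fin n)) :
    ∫⁻ p in cone a y, F p * G p / ENNReal.ofReal (p.2 ^ n) ≤
      areaIntegral n a F y * areaIntegral n a (fun p => ENNReal.ofReal p.2 * G p) y := by
  have hden : Measurable fun p : EuclideanSpace ℝ (Fin n) × ℝ => ENNReal.ofReal (p.2 ^ (n + 1)) :=
    (measurable_snd.pow_const _).ennreal_ofReal
  refine lintegral_le_of_sq_le_mul ((hF.pow_const 2).div hden).aemeasurable
    (((measurable_snd.ennreal_ofReal.mul hG).pow_const 2).div hden).aemeasurable
    (ae_restrict_of_forall_mem (measurableSet_cone a y) fun p hp => le_of_eq ?_)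
  have ht : 0 < p.2 := hp.2
  rw [ENNReal.ofReal_pow ht.le, ENNReal.ofReal_pow ht.le]
  exact ENNReal.mul_div_pow_sq (ENNReal.ofReal_pos.2 ht).ne' ENNReal.ofReal_ne_top _ _ n

theorem area_pairing_bound (n : ℕ) (a : ℝ) (ha : 0 < a)
    (F G : EuclideanSpace ℝ (Fin n) × ℝ → ℝ≥0∞) (hF : Measurable F) (hG : Measurable G) :
    (∫⁻ x, ∫⁻ t in Set.Ioi (0 : ℝ), F (x, t) * G (x, t)) ≤
      (volume (Metric.ball (0 : EuclideanSpace ℝ (Fin n)) 1) * ENNReal.ofReal (a ^ n))⁻¹ *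
        ∫⁻ x, areaIntegral n a F x * areaIntegral n a (fun p => ENNReal.ofReal p.2 * G p) x := by
  set C := volume (Metric.ball (0 : EuclideanSpace ℝ (Fin n)) 1) * ENNReal.ofReal (a ^ n)
  have hC₀ : C ≠ 0 :=
    mul_ne_zero (Metric.measure_ball_pos _ _ one_pos).ne' (ENNReal.ofReal_pos.2 (pow_pos ha n)).ne'
  have hC : C ≠ ∞ := ENNReal.mul_ne_top measure_ball_lt_top.ne ENNReal.ofReal_ne_top
  set h := fun p : EuclideanSpace ℝ (Fin n) × ℝ => F p * G p / ENNReal.ofReal (p.2 ^ n)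
  have hh : Measurable h := (hF.mul hG).div (measurable_snd.pow_const n).ennreal_ofReal
  calc (∫⁻ x, ∫⁻ t in Ioi (0 : ℝ), F (x, t) * G (x, t))
      = ∫⁻ x, ∫⁻ t in Ioi (0 : ℝ), C⁻¹ * (h (x, t) * volume (Metric.ball x (a * t))) := by
        refine lintegral_congr fun x => setLIntegral_congr_fun measurableSet_Ioi fun t ht => ?_
        rw [EuclideanSpace.volume_ball_mul x ha ht, ENNReal.inv_mul_div_mul_mul_cancel hC₀ hC
          (ENNReal.ofReal_pos.2 (pow_pos ht n)).ne' ENNReal.ofReal_ne_top]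
    _ = C⁻¹ * ∫⁻ y, ∫⁻ p in cone a y, h p := by
        simp only [lintegral_const_mul' _ _ (ENNReal.inv_ne_top.2 hC₀)]
        rw [lintegral_mul_measure_ball_eq_lintegral_cone a volume hh, ← Measure.volume_eq_prod]
    _ ≤ C⁻¹ * ∫⁻ y, areaIntegral n a F y * areaIntegral n a (fun p => ENNReal.ofReal p.2 * G p) y :=
        mul_le_mul_right (lintegral_mono fun y => lintegral_cone_le_areaIntegral_mul a hF hG y) _
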